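/- arXiv:1603.09275 — 3 statements merged into one kernel-verified Lean document; each statement's English description precedes it below -/
import Mathlib

section
/- A Brandt semigroup B(G, I) is finitely generated (as an inverse semigroup) if and only if I is finite and G is finitely generated. -/
inductive InvGen {S : Type*} [Mul S] [Inv S] (X : Set S) : S → Prop
  | base {x : S} : x ∈ X → InvGen X x
  | mul {a b : S} : InvGen X a → InvGen X b → InvGen X (a * b)
  | inv {a : S} : InvGen X a → InvGen X a⁻¹

def IsInvSub {S : Type*} [Mul S] [Inv S] (T : Set S) : Prop :=
  (∀ a ∈ T, ∀ b ∈ T, a * b ∈ T) ∧ ∀ a ∈ T, a⁻¹ ∈ T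

def InvFG {S : Type*} [Mul S] [Inv S] (T : Set S) : Prop :=
  ∃ X : Finset S, ↑X ⊆ T ∧ T = {s | InvGen (↑X : Set S) s}

def Howson (S : Type*) [Mul S] [Inv S] : Prop :=
  ∀ U V : Set S, IsInvSub U → IsInvSub V → InvFG U → InvFG V → InvFG (U ∩ V)
abbrev Brandt (G I : Type*) := Option (I × G × I)

open Classical in
noncomputable instance {G I : Type*} [Group G] : Mul (Brandt G I) :=
  ⟨fun a b =>
    match a, b with
    | some (i, g, j), some (j', h, k) => if j = j' then some (i, g * h, k) else none
    | _, _ => none⟩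

instance {G I : Type*} [Group G] : Inv (Brandt G I) :=
  ⟨fun a =>
    match a with
    | some (i, g, j) => some (j, g⁻¹, i)
    | none => none⟩

/-!
Every element of `B(G, I)` generated by a finite set `X` only involves indices occurring in `X`
and a group entry in the subgroup generated by the group entries of `X`, because these elements
together with `0` form an inverse subsemigroup. Taking the elements `(i, 1, i)` and `(i₀, g, i₀)`
shows that `I` is finite and that `G` is finitely generated. Conversely, if `G` is generated by
`S`, the finitely many elements `(i, s, j)` with `s ∈ S ∪ {1}`, together with `0`, generate
everything, since `(i, g, j) (j, h, k) = (i, gh, k)` and `(j, g, i)⁻¹ = (i, g⁻¹, j)`.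
-/

open Set

section InvGen

variable {S : Type*} [Mul S] [Inv S]

theorem InvGen.mem_of_subset {X T : Set S} (hT : IsInvSub T) (hXT : X ⊆ T) {s : S}
    (hs : InvGen X s) : s ∈ T := by
  induction hs with
  | base hx => exact hXT hx
  | mul _ _ iha ihb => exact hT.1 _ iha _ ihb
  | inv _ iha => exact hT.2 _ iha

theorem invFG_univ_iff :
    InvFG (univ : Set S) ↔ ∃ X : Set S, X.Finite ∧ ∀ s, InvGen X s := by
  constructor
  · rintro ⟨X, -, hX⟩
    exact ⟨X, X.finite_toSet, fun s => (hX ▸ mem_univ s :)⟩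
  · rintro ⟨X, hXfin, hX⟩
    exact ⟨hXfin.toFinset, subset_univ _, by ext s; simpa using hX s⟩

end InvGen

namespace Brandt

variable {G I : Type*} [Group G]

theorem some_mul_some_self (i j k : I) (g h : G) :
    (some (i, g, j) : Brandt G I) * some (j, h, k) = some (i, g * h, k) :=
  if_pos rfl

theorem some_mul_some_of_ne {j j' : I} (hj : j ≠ j') (i k : I) (g h : G) :
    (some (i, g, j) : Brandt G I) * some (j', h, k) = none :=
  if_neg hj

theorem none_mul (a : Brandt G I) : (none : Brandt G I) * a = none := by
  cases a <;> rfl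

theorem mul_none (a : Brandt G I) : a * (none : Brandt G I) = none := by
  rcases a with _ | ⟨i, g, j⟩ <;> rfl

theorem some_inv (i j : I) (g : G) : (some (i, g, j) : Brandt G I)⁻¹ = some (j, g⁻¹, i) := rfl

theorem none_inv : (none : Brandt G I)⁻¹ = none := rfl

theorem mul_eq_some {a b : Brandt G I} {i k : I} {g : G} (h : a * b = some (i, g, k)) :
    ∃ (g₁ g₂ : G) (j : I), a = some (i, g₁, j) ∧ b = some (j, g₂, k) ∧ g = g₁ * g₂ := by
  rcases a with _ | ⟨i', g₁, j₁⟩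
  · simp [none_mul] at h
  rcases b with _ | ⟨j₂, g₂, k'⟩
  · simp [mul_none] at h
  by_cases hj : j₁ = j₂
  · subst hj
    rw [some_mul_some_self] at h
    obtain ⟨rfl, rfl, rfl⟩ := by simpa using h
    exact ⟨g₁, g₂, j₁, rfl, rfl, rfl⟩
  · simp [some_mul_some_of_ne hj] at h

/-- The inverse subsemigroup `B(H, A) ∪ {0}` of `B(G, I)`. -/
def restrict (A : Set I) (H : Subgroup G) : Set (Brandt G I) :=
  {s | ∀ i g j, s = some (i, g, j) → i ∈ A ∧ g ∈ H ∧ j ∈ A}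

theorem isInvSub_restrict (A : Set I) (H : Subgroup G) : IsInvSub (restrict A H) := by
  constructor
  · intro a ha b hb i g k hab
    obtain ⟨g₁, g₂, j, rfl, rfl, rfl⟩ := mul_eq_some hab
    obtain ⟨hi, hg₁, -⟩ := ha i g₁ j rfl
    obtain ⟨-, hg₂, hk⟩ := hb j g₂ k rfl
    exact ⟨hi, H.mul_mem hg₁ hg₂, hk⟩
  · rintro (_ | ⟨i, g, j⟩) ha i' g' j' h
    · simp [none_inv] at h
    · obtain ⟨rfl, rfl, rfl⟩ := by simpa [some_inv] using h
      obtain ⟨hi, hg, hj⟩ := ha i g j rfl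
      exact ⟨hj, H.inv_mem hg, hi⟩

theorem exists_finite_subset_restrict {X : Set (Brandt G I)} (hX : X.Finite) :
    ∃ A : Set I, A.Finite ∧ ∃ M : Set G, M.Finite ∧ X ⊆ restrict A (Subgroup.closure M) := by
  have hXsome : (some ⁻¹' X).Finite := hX.preimage (Option.some_injective _).injOn
  refine ⟨Prod.fst '' (some ⁻¹' X) ∪ (fun x => x.2.2) '' (some ⁻¹' X),
    (hXsome.image _).union (hXsome.image _), (fun x => x.2.1) '' (some ⁻¹' X), hXsome.image _, ?_⟩
  rintro s hs i g j rfl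
  exact ⟨Or.inl ⟨_, hs, rfl⟩, Subgroup.subset_closure ⟨_, hs, rfl⟩, Or.inr ⟨_, hs, rfl⟩⟩

theorem finite_and_fg_of_invFG_univ [Nonempty I] (h : InvFG (univ : Set (Brandt G I))) :
    Finite I ∧ Group.FG G := by
  obtain ⟨X, hXfin, hX⟩ := invFG_univ_iff.1 h
  obtain ⟨A, hA, M, hM, hXA⟩ := exists_finite_subset_restrict hXfin
  have hmem (i : I) (g : G) (j : I) : i ∈ A ∧ g ∈ Subgroup.closure M ∧ j ∈ A :=
    (hX _).mem_of_subset (isInvSub_restrict _ _) hXA i g j rfl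
  obtain ⟨i₀⟩ := ‹Nonempty I›
  refine ⟨finite_univ_iff.1 (hA.subset fun i _ => (hmem i 1 i).1), Group.fg_iff.2 ⟨M, ?_, hM⟩⟩
  exact eq_top_iff.2 fun g _ => (hmem i₀ g i₀).2.1

theorem invGen_some_of_mem_closure {X : Set (Brandt G I)} {S : Set G}
    (hone : ∀ i j, InvGen X (some (i, 1, j))) (hS : ∀ i, ∀ g ∈ S, ∀ j, InvGen X (some (i, g, j)))
    {g : G} (hg : g ∈ Subgroup.closure S) (i j : I) : InvGen X (some (i, g, j)) := by
  induction hg using Subgroup.closure_induction generalizing i j with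
  | mem g hg => exact hS i g hg j
  | one => exact hone i j
  | mul g h _ _ ihg ihh => simpa only [some_mul_some_self] using (ihg i i).mul (ihh i j)
  | inv g _ ihg => simpa only [some_inv, inv_inv] using (ihg j i).inv

def generators (S : Set G) : Set (Brandt G I) :=
  insert none (some '' (univ ×ˢ insert 1 S ×ˢ univ))

theorem finite_generators [Finite I] {S : Set G} (hS : S.Finite) :
    (generators S : Set (Brandt G I)).Finite :=
  ((finite_univ.prod ((hS.insert 1).prod finite_univ)).image _).insert _

theorem invGen_generators {S : Set G} (hS : Subgroup.closure S = ⊤) (s : Brandt G I) :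
    InvGen (generators S) s := by
  have hbase : ∀ (i : I), ∀ g ∈ insert 1 S, ∀ j, InvGen (generators S) (some (i, g, j)) :=
    fun i g hg j => .base (mem_insert_of_mem _ ⟨(i, g, j), by simp [hg], rfl⟩)
  rcases s with _ | ⟨i, g, j⟩
  · exact .base (mem_insert _ _)
  · exact invGen_some_of_mem_closure (hbase · 1 (mem_insert _ _))
      (fun i g hg => hbase i g (mem_insert_of_mem _ hg)) (hS ▸ Subgroup.mem_top g) i j

end Brandt

theorem stmt_0 {G I : Type*} [Group G] [Nonempty I] :
    InvFG (Set.univ : Set (Brandt G I)) ↔ Finite I ∧ Group.FG G := by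
  refine ⟨Brandt.finite_and_fg_of_invFG_univ, fun ⟨hI, hG⟩ => ?_⟩
  obtain ⟨S, hS, hSfin⟩ := Group.fg_iff.1 hG
  exact invFG_univ_iff.2
    ⟨Brandt.generators S, Brandt.finite_generators hSfin, Brandt.invGen_generators hS⟩
end

section
/- Let S be an inverse semigroup, T = ⟨X⟩ the inverse subsemigroup of S generated by a subset X, and J a 𝒥-class of S. Then every element of T ∩ J lies in the inverse subsemigroup of S generated by the set (E_J · X) ∩ T ∩ J, where E_J · X = { e·x : e ∈ E_J, x ∈ X } and E_J denotes the set of idempotents of S lying in J. -/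
class InverseSemigroup (S : Type*) extends Semigroup S, Inv S where
  mul_inv_mul : ∀ a : S, a * a⁻¹ * a = a
  inv_invol : ∀ a : S, a⁻¹⁻¹ = a
  idem_comm : ∀ a b : S, (a * a⁻¹) * (b * b⁻¹) = (b * b⁻¹) * (a * a⁻¹)

def Idl {S : Type*} [Semigroup S] (a : S) : Set S :=
  {a} ∪ {x | ∃ s, s * a = x} ∪ {x | ∃ s, a * s = x} ∪ {x | ∃ s t, s * a * t = x}

def Jrel {S : Type*} [Semigroup S] (a b : S) : Prop := Idl a = Idl b

def Jcl {S : Type*} [Semigroup S] (a : S) : Set S := {b | Jrel a b}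

/-!
Write `t ∈ T ∩ J` as `e * t` with `e = t * t⁻¹`, an idempotent of `T ∩ J`, and push the
idempotent down the construction of `t` in `⟨X⟩`: for a generator, `e * x` is itself one of the
new generators; a product splits as `e * (u * v) = (e * u) * (f * v)` with `f = (e * u)⁻¹ * (e * u)`;
an inverse is `e * u⁻¹ = (f * u)⁻¹` with `f = (e * u⁻¹)⁻¹ * (e * u⁻¹)`. Every new idempotent and
factor stays in `J`, being `𝒥`-below an element of `J` and `𝒥`-above one.
-/

section Ideals

variable {S : Type*} [Semigroup S]

lemma mul_mem_Idl_left (s a : S) : s * a ∈ Idl a := Or.inl (Or.inl (Or.inr ⟨s, rfl⟩))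

lemma mul_mem_Idl_right (a s : S) : a * s ∈ Idl a := Or.inl (Or.inr ⟨s, rfl⟩)

lemma mul_mul_mem_Idl (s a t : S) : s * a * t ∈ Idl a := Or.inr ⟨s, t, rfl⟩

lemma Idl.mul_mem_left {a x : S} (s : S) (hx : x ∈ Idl a) : s * x ∈ Idl a := by
  rcases hx with ((rfl | ⟨v, rfl⟩) | ⟨v, rfl⟩) | ⟨v, w, rfl⟩
  · exact mul_mem_Idl_left s x
  · rw [← mul_assoc]; exact mul_mem_Idl_left _ a
  · rw [← mul_assoc]; exact mul_mul_mem_Idl s a v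
  · simp only [← mul_assoc]; exact mul_mul_mem_Idl _ a w

lemma Idl.mul_mem_right {a x : S} (s : S) (hx : x ∈ Idl a) : x * s ∈ Idl a := by
  rcases hx with ((rfl | ⟨v, rfl⟩) | ⟨v, rfl⟩) | ⟨v, w, rfl⟩
  · exact mul_mem_Idl_right x s
  · exact mul_mul_mem_Idl v a s
  · rw [mul_assoc]; exact mul_mem_Idl_right a _
  · rw [mul_assoc _ w]; exact mul_mul_mem_Idl v a _

lemma Idl_subset_of_mem {a b : S} (hb : b ∈ Idl a) : Idl b ⊆ Idl a := by
  rintro x (((rfl | ⟨v, rfl⟩) | ⟨v, rfl⟩) | ⟨v, w, rfl⟩)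
  · exact hb
  · exact Idl.mul_mem_left v hb
  · exact Idl.mul_mem_right v hb
  · exact Idl.mul_mem_right w (Idl.mul_mem_left v hb)

lemma mem_Jcl_of_mem_Idl {a b c x : S} (hb : b ∈ Jcl a) (hc : c ∈ Jcl a)
    (hbx : b ∈ Idl x) (hxc : x ∈ Idl c) : x ∈ Jcl a :=
  Set.Subset.antisymm (hb.trans_subset (Idl_subset_of_mem hbx))
    ((Idl_subset_of_mem hxc).trans hc.symm.subset)

end Ideals

namespace InverseSemigroup

variable {S : Type*} [InverseSemigroup S]

lemma inv_mul_inv (a : S) : a⁻¹ * a * a⁻¹ = a⁻¹ := by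
  simpa only [inv_invol] using mul_inv_mul a⁻¹

lemma isIdempotentElem_mul_inv (a : S) : IsIdempotentElem (a * a⁻¹) := by
  rw [IsIdempotentElem, ← mul_assoc, mul_inv_mul]

lemma isIdempotentElem_inv_mul (a : S) : IsIdempotentElem (a⁻¹ * a) := by
  rw [IsIdempotentElem, ← mul_assoc, inv_mul_inv]

/-- The projections `e * e⁻¹` and `e⁻¹ * e` commute, so
`e⁻¹ = e⁻¹ * (e * e) * e⁻¹ = (e * e⁻¹) * (e⁻¹ * e)`, which `e` absorbs on both sides. -/
theorem _root_.IsIdempotentElem.inv_eq_self {e : S} (he : IsIdempotentElem e) : e⁻¹ = e := by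
  have hcomm : e * e⁻¹ * (e⁻¹ * e) = e⁻¹ * e * (e * e⁻¹) := by
    simpa only [inv_invol] using idem_comm e e⁻¹
  have hf : e⁻¹ = e * e⁻¹ * (e⁻¹ * e) := by
    calc e⁻¹ = e⁻¹ * e * e⁻¹ := (inv_mul_inv e).symm
      _ = e⁻¹ * (e * e) * e⁻¹ := by rw [he.eq]
      _ = e * e⁻¹ * (e⁻¹ * e) := by rw [hcomm]; simp only [mul_assoc]
  have hfe : e⁻¹ * e = e⁻¹ := by
    conv_lhs => rw [hf]
    conv_rhs => rw [hf]
    simp only [mul_assoc, he.eq]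
  have hef : e * e⁻¹ = e⁻¹ := by
    conv_lhs => rw [hf]
    conv_rhs => rw [hf]
    simp only [← mul_assoc, he.eq]
  calc e⁻¹ = e * e⁻¹ * e := by rw [hef, hfe]
    _ = e := mul_inv_mul e

theorem _root_.IsIdempotentElem.commute {e f : S} (he : IsIdempotentElem e)
    (hf : IsIdempotentElem f) : Commute e f := by
  have h := idem_comm e f
  rwa [he.inv_eq_self, hf.inv_eq_self, he.eq, hf.eq] at h

theorem eq_inv_of_mul_mul {p x : S} (hp : p * x * p = p) (hx : x * p * x = x) : x = p⁻¹ := by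
  have hxp : IsIdempotentElem (x * p) := by rw [IsIdempotentElem, ← mul_assoc, hx]
  have hpx : IsIdempotentElem (p * x) := by rw [IsIdempotentElem, ← mul_assoc, hp]
  have hx' : x = p⁻¹ * (p * x) := by
    calc x = x * (p * p⁻¹ * p) * x := by rw [mul_inv_mul, hx]
      _ = x * p * (p⁻¹ * p) * x := by simp only [mul_assoc]
      _ = p⁻¹ * p * (x * p) * x := by rw [(hxp.commute (isIdempotentElem_inv_mul p)).eq]
      _ = p⁻¹ * (p * x) := by rw [mul_assoc _ _ x, hx, mul_assoc]
  have hpx' : p * x = p * p⁻¹ := by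
    calc p * x = p * p⁻¹ * (p * x) := by rw [← mul_assoc, mul_inv_mul]
      _ = p * x * (p * p⁻¹) := ((isIdempotentElem_mul_inv p).commute hpx).eq
      _ = p * p⁻¹ := by rw [← mul_assoc, hp]
  rw [hx', hpx', ← mul_assoc, inv_mul_inv]

protected theorem mul_inv_rev (a b : S) : (a * b)⁻¹ = b⁻¹ * a⁻¹ := by
  have hcomm := ((isIdempotentElem_mul_inv b).commute (isIdempotentElem_inv_mul a)).eq
  refine (eq_inv_of_mul_mul ?_ ?_).symm
  · calc a * b * (b⁻¹ * a⁻¹) * (a * b) = a * (b * b⁻¹ * (a⁻¹ * a)) * b := by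
          simp only [mul_assoc]
      _ = a * a⁻¹ * a * (b * b⁻¹ * b) := by rw [hcomm]; simp only [mul_assoc]
      _ = a * b := by rw [mul_inv_mul, mul_inv_mul]
  · calc b⁻¹ * a⁻¹ * (a * b) * (b⁻¹ * a⁻¹) = b⁻¹ * (a⁻¹ * a * (b * b⁻¹)) * a⁻¹ := by
          simp only [mul_assoc]
      _ = b⁻¹ * b * b⁻¹ * (a⁻¹ * a * a⁻¹) := by rw [← hcomm]; simp only [mul_assoc]
      _ = b⁻¹ * a⁻¹ := by rw [inv_mul_inv, inv_mul_inv]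

lemma inv_mem_Jcl {a w : S} (hw : w ∈ Jcl a) : w⁻¹ ∈ Jcl a :=
  mem_Jcl_of_mem_Idl hw hw (by simpa only [mul_inv_mul] using mul_mul_mem_Idl w w⁻¹ w)
    (by simpa only [inv_mul_inv] using mul_mul_mem_Idl w⁻¹ w w⁻¹)

lemma inv_mul_self_mem_Jcl {a w : S} (hw : w ∈ Jcl a) : w⁻¹ * w ∈ Jcl a :=
  mem_Jcl_of_mem_Idl hw hw
    (by simpa only [← mul_assoc, mul_inv_mul] using mul_mem_Idl_left w (w⁻¹ * w))
    (mul_mem_Idl_left w⁻¹ w)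

lemma mul_inv_self_mem_Jcl {a w : S} (hw : w ∈ Jcl a) : w * w⁻¹ ∈ Jcl a :=
  mem_Jcl_of_mem_Idl hw hw (by simpa only [mul_inv_mul] using mul_mem_Idl_right (w * w⁻¹) w)
    (mul_mem_Idl_right w w⁻¹)

lemma inv_mul_self_mul_of_isIdempotentElem {e : S} (he : IsIdempotentElem e) (u : S) :
    (e * u⁻¹)⁻¹ * (e * u⁻¹) * u = (e * u⁻¹)⁻¹ := by
  rw [InverseSemigroup.mul_inv_rev, inv_invol, he.inv_eq_self]
  calc u * e * (e * u⁻¹) * u = u * (e * (u⁻¹ * u)) := by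
        simp only [mul_assoc]; rw [← mul_assoc e e, he.eq]
    _ = u * e := by
      rw [(he.commute (isIdempotentElem_inv_mul u)).eq, ← mul_assoc, ← mul_assoc, mul_inv_mul]

/-- The paper's generating set `(E_J · X) ∩ T ∩ J`, for `T = ⟨X⟩` and `J` the `𝒥`-class of `a`. -/
def jClassGens (X : Set S) (a : S) : Set S :=
  ({y | ∃ e ∈ {e : S | e * e = e} ∩ Jcl a, ∃ x ∈ X, y = e * x} : Set S) ∩
    {s | InvGen X s} ∩ Jcl a

theorem _root_.InvGen.idem_mul_mem_jClassGens {X : Set S} {a u e : S} (hu : InvGen X u)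
    (he : IsIdempotentElem e) (heT : InvGen X e) (heJ : e ∈ Jcl a) (hJ : e * u ∈ Jcl a) :
    InvGen (jClassGens X a) (e * u) := by
  induction hu generalizing e with
  | @base x hx => exact .base ⟨⟨⟨e, ⟨he, heJ⟩, x, hx, rfl⟩, .mul heT (.base hx)⟩, hJ⟩
  | @mul u v huT _ ihu ihv =>
    have hsplit : e * u * ((e * u)⁻¹ * (e * u) * v) = e * (u * v) := by
      rw [← mul_assoc, ← mul_assoc, mul_inv_mul, mul_assoc]
    have hwT : InvGen X (e * u) := .mul heT huT
    have hwJ : e * u ∈ Jcl a := mem_Jcl_of_mem_Idl hJ heJ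
      (by simpa only [mul_assoc] using mul_mem_Idl_right (e * u) v) (mul_mem_Idl_right e u)
    have hfJ := inv_mul_self_mem_Jcl hwJ
    have hfvJ : (e * u)⁻¹ * (e * u) * v ∈ Jcl a := mem_Jcl_of_mem_Idl hJ hfJ
      (hsplit ▸ mul_mem_Idl_left _ _) (mul_mem_Idl_right _ v)
    rw [← hsplit]
    exact .mul (ihu he heT heJ hwJ) (ihv (isIdempotentElem_inv_mul _) (.mul (.inv hwT) hwT) hfJ hfvJ)
  | @inv u huT ihu =>
    have hwT : InvGen X (e * u⁻¹) := .mul heT (.inv huT)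
    have hflip := inv_mul_self_mul_of_isIdempotentElem he u
    have h := ihu (isIdempotentElem_inv_mul _) (.mul (.inv hwT) hwT)
      (inv_mul_self_mem_Jcl hJ) (by rw [hflip]; exact inv_mem_Jcl hJ)
    simpa only [hflip, inv_invol] using h.inv

end InverseSemigroup

theorem stmt_2 {S : Type*} [InverseSemigroup S] (X : Set S) (a : S) :
    ∀ t : S, InvGen X t → t ∈ Jcl a →
      InvGen (({y | ∃ e ∈ {e : S | e * e = e} ∩ Jcl a, ∃ x ∈ X, y = e * x} :
        Set S) ∩ {s | InvGen X s} ∩ Jcl a) t := by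
  intro t ht htJ
  have h := ht.idem_mul_mem_jClassGens (InverseSemigroup.isIdempotentElem_mul_inv t)
    (.mul ht (.inv ht)) (InverseSemigroup.mul_inv_self_mem_Jcl htJ)
    (by rwa [InverseSemigroup.mul_inv_mul])
  rwa [InverseSemigroup.mul_inv_mul] at h
end

section
/- Every inverse subsemigroup of the bicyclic semigroup that does not consist solely of idempotents is finitely generated. -/
def Bicyclic := ℕ × ℕ

instance : Mul Bicyclic :=
  ⟨fun a b => ((a.1 + b.1 - min a.2 b.1, a.2 + b.2 - min a.2 b.1) : ℕ × ℕ)⟩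

instance : Inv Bicyclic := ⟨fun a => ((a.2, a.1) : ℕ × ℕ)⟩

/-!
Call `q - p` the shift of `(p, q) = x⁻ᵖ xᵠ`. Let `g` be the least positive shift in `T` and
`c = (r, r + g) ∈ T`. Conjugation by `c` moves `(p, q)` to `(p + g, q + g)` when `p, q ≥ r`, and
the reverse conjugation moves it back, so every element of `T` with both coordinates at least
`r + g` is a conjugate by `c` of a smaller element of `T`. If `(p, q) ∈ T` with `p < q`, then
`(p, p + g) ∈ T` and `g ∣ q - p`, so `(p, q)` is a power of `(p, p + g)`. Hence `T` is generated by
its finitely many elements with both coordinates below `r + 2g`.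
-/

section InverseSubsemigroup

variable {S : Type*} [Mul S] [Inv S] {T X : Set S} {a b : S}

theorem IsInvSub.mul_mem (hT : IsInvSub T) (ha : a ∈ T) (hb : b ∈ T) : a * b ∈ T :=
  hT.1 a ha b hb

theorem IsInvSub.inv_mem (hT : IsInvSub T) (ha : a ∈ T) : a⁻¹ ∈ T :=
  hT.2 a ha

theorem isInvSub_setOf_invGen (X : Set S) : IsInvSub {s | InvGen X s} :=
  ⟨fun _ ha _ hb => InvGen.mul ha hb, fun _ ha => InvGen.inv ha⟩

theorem InvGen.mem (hT : IsInvSub T) (hXT : X ⊆ T) (h : InvGen X a) : a ∈ T := by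
  induction h with
  | base hx => exact hXT hx
  | mul _ _ iha ihb => exact hT.mul_mem iha ihb
  | inv _ ih => exact hT.inv_mem ih

theorem invFG_of_finite (hT : IsInvSub T) (hX : X.Finite) (hXT : X ⊆ T)
    (hgen : ∀ t ∈ T, InvGen X t) : InvFG T :=
  ⟨hX.toFinset, by simpa using hXT, by
    simp only [Set.Finite.coe_toFinset]
    exact Set.Subset.antisymm hgen fun _ h => h.mem hT hXT⟩

end InverseSubsemigroup

namespace Bicyclic

/-- `mk p q = x⁻ᵖ xᵠ` for the generator `x = mk 0 1`. -/
def mk (p q : ℕ) : Bicyclic := (p, q)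

@[simp] theorem mk_mul_mk (a b c d : ℕ) :
    mk a b * mk c d = mk (a + c - min b c) (b + d - min b c) := rfl

@[simp] theorem inv_mk (a b : ℕ) : (mk a b)⁻¹ = mk b a := rfl

@[simp] theorem mk_eq_mk {a b c d : ℕ} : mk a b = mk c d ↔ a = c ∧ b = d := Prod.mk_inj

theorem mk_mul_self_eq_self_iff (p q : ℕ) : mk p q * mk p q = mk p q ↔ p = q := by
  simp only [mk_mul_mk, mk_eq_mk]
  omega

theorem exists_mk_add_mem {T : Set Bicyclic} (hT : IsInvSub T) {t : Bicyclic} (ht : t ∈ T)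
    (hnt : t * t ≠ t) : ∃ d, 0 < d ∧ ∃ p, mk p (p + d) ∈ T := by
  obtain ⟨p, q⟩ := t
  change mk p q ∈ T at ht
  change ¬mk p q * mk p q = mk p q at hnt
  rw [mk_mul_self_eq_self_iff] at hnt
  rcases Nat.lt_or_gt_of_ne hnt with h | h
  · exact ⟨q - p, by omega, p, by rwa [Nat.add_sub_cancel' h.le]⟩
  · exact ⟨p - q, by omega, q, by simpa [Nat.add_sub_cancel' h.le] using hT.inv_mem ht⟩

variable {S : Set Bicyclic} {p q r d : ℕ}

theorem mk_add_mul_mem (hS : IsInvSub S) (h : mk p (p + d) ∈ S) :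
    ∀ k : ℕ, mk p (p + (k + 1) * d) ∈ S
  | 0 => by simpa using h
  | k + 1 => by
    have hprod : mk p (p + (k + 1) * d) * mk p (p + d) = mk p (p + (k + 1 + 1) * d) := by
      rw [add_one_mul (k + 1)]
      generalize (k + 1) * d = e
      simp only [mk_mul_mk, mk_eq_mk]
      omega
    exact hprod ▸ hS.mul_mem (mk_add_mul_mem hS h k) h

theorem inv_mul_mk_mul (hp : r ≤ p) (hq : r ≤ q) :
    (mk r (r + d))⁻¹ * mk p q * mk r (r + d) = mk (p + d) (q + d) := by
  simp only [inv_mk, mk_mul_mk, mk_eq_mk]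
  omega

theorem mk_mul_mk_mul_inv (hp : r ≤ p) (hq : r ≤ q) :
    mk r (r + d) * mk (p + d) (q + d) * (mk r (r + d))⁻¹ = mk p q := by
  simp only [inv_mk, mk_mul_mk, mk_eq_mk]
  omega

theorem mk_mem_of_mk_add_mem (hS : IsInvSub S) (hr : mk r (r + d) ∈ S)
    (h : mk (p + d) (q + d) ∈ S) (hp : r ≤ p) (hq : r ≤ q) : mk p q ∈ S :=
  mk_mul_mk_mul_inv hp hq ▸ hS.mul_mem (hS.mul_mem hr h) (hS.inv_mem hr)

/-- Conjugation by a high enough power of `mk p q` moves the shift `d` from `r` to `p`. -/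
theorem mk_add_mem_of_lt (hS : IsInvSub S) (hr : mk r (r + d) ∈ S) (h : mk p q ∈ S)
    (hpq : p < q) : mk p (p + d) ∈ S := by
  obtain ⟨e, rfl⟩ := Nat.exists_eq_add_of_le hpq.le
  have hQ : mk p (p + (r + 1) * e) ∈ S := mk_add_mul_mem hS h r
  have hrQ : r + 1 ≤ (r + 1) * e := Nat.le_mul_of_pos_right (r + 1) (by omega)
  have hconj : mk p (p + (r + 1) * e) * mk r (r + d) * (mk p (p + (r + 1) * e))⁻¹ =
      mk p (p + d) := by
    generalize (r + 1) * e = Q at hrQ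
    simp only [inv_mk, mk_mul_mk, mk_eq_mk]
    omega
  exact hconj ▸ hS.mul_mem (hS.mul_mem hQ hr) (hS.inv_mem hQ)

theorem dvd_sub_of_mk_mem (hS : IsInvSub S) (hd : 0 < d) (hr : mk r (r + d) ∈ S)
    (hmin : ∀ p q, mk p q ∈ S → p < q → d ≤ q - p) (h : mk p q ∈ S) : d ∣ q - p := by
  induction hn : q - p using Nat.strong_induction_on generalizing p with
  | _ n ih =>
    rcases Nat.eq_zero_or_pos n with rfl | hn0
    · exact dvd_zero d
    have hpq : p < q := by omega
    have hdn : d ≤ n := hn ▸ hmin p q h hpq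
    have hstep : (mk p (p + d))⁻¹ * mk p q = mk (p + d) q := by
      simp only [inv_mk, mk_mul_mk, mk_eq_mk]
      omega
    have hrest : d ∣ n - d :=
      ih (n - d) (by omega) (hstep ▸ hS.mul_mem (hS.inv_mem (mk_add_mem_of_lt hS hr h hpq)) h)
        (by omega)
    simpa [Nat.sub_add_cancel hdn] using Nat.dvd_add hrest (dvd_refl d)

theorem finite_setOf_lt (N : ℕ) : {y : Bicyclic | y.1 < N ∧ y.2 < N}.Finite :=
  (Set.finite_Iio N).prod (Set.finite_Iio N)

theorem invGen_of_mem {T : Set Bicyclic} {g : ℕ} (hT : IsInvSub T) (hg : 0 < g)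
    (hr : mk r (r + g) ∈ T) (hmin : ∀ p q, mk p q ∈ T → p < q → g ≤ q - p) {x : Bicyclic}
    (hx : x ∈ T) : InvGen {y ∈ T | y.1 < r + 2 * g ∧ y.2 < r + 2 * g} x := by
  set X := {y ∈ T | y.1 < r + 2 * g ∧ y.2 < r + 2 * g}
  have hX {p q : ℕ} (h : mk p q ∈ T) (hp : p < r + 2 * g) (hq : q < r + 2 * g) :
      InvGen X (mk p q) :=
    InvGen.base ⟨h, hp, hq⟩
  have hc : InvGen X (mk r (r + g)) := hX hr (by omega) (by omega)
  suffices key : ∀ p q, mk p q ∈ T → p ≤ q → InvGen X (mk p q) by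
    obtain ⟨p, q⟩ := x
    rcases le_total p q with h | h
    · exact key p q hx h
    · exact InvGen.inv (key q p (hT.inv_mem hx) h)
  intro p
  induction p using Nat.strong_induction_on with
  | _ p ih =>
    intro q h hpq
    by_cases hp : r + g ≤ p
    · obtain ⟨p, rfl⟩ : ∃ p', p = p' + g := ⟨p - g, by omega⟩
      obtain ⟨q, rfl⟩ : ∃ q', q = q' + g := ⟨q - g, by omega⟩
      have h' : mk p q ∈ T := mk_mem_of_mk_add_mem hT hr h (by omega) (by omega)
      rw [← inv_mul_mk_mul (r := r) (by omega) (by omega)]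
      exact (hc.inv.mul (ih p (by omega) q h' (by omega))).mul hc
    rcases hpq.eq_or_lt with rfl | hlt
    · exact hX h (by omega) (by omega)
    obtain ⟨_ | k, hk⟩ := dvd_sub_of_mk_mem hT hg hr hmin h
    · omega
    have hq : q = p + (k + 1) * g := by rw [mul_comm] at hk; omega
    rw [hq]
    exact mk_add_mul_mem (isInvSub_setOf_invGen X)
      (hX (mk_add_mem_of_lt hT hr h hlt) (by omega) (by omega)) k

theorem exists_minimal_shift {T : Set Bicyclic} (hT : IsInvSub T) {t : Bicyclic} (ht : t ∈ T)
    (hnt : t * t ≠ t) :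
    ∃ g r, 0 < g ∧ mk r (r + g) ∈ T ∧ ∀ p q, mk p q ∈ T → p < q → g ≤ q - p := by
  classical
  have hex := exists_mk_add_mem hT ht hnt
  obtain ⟨hg, r, hr⟩ := Nat.find_spec hex
  refine ⟨Nat.find hex, r, hg, hr, fun p q h hpq => Nat.find_min' hex ⟨by omega, p, ?_⟩⟩
  rwa [Nat.add_sub_cancel' hpq.le]

end Bicyclic

theorem stmt_8 (T : Set Bicyclic) (hT : IsInvSub T)
    (hni : ∃ t ∈ T, ¬ t * t = t) : InvFG T := by
  obtain ⟨t, ht, hnt⟩ := hni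
  obtain ⟨g, r, hg, hr, hmin⟩ := Bicyclic.exists_minimal_shift hT ht hnt
  exact invFG_of_finite hT ((Bicyclic.finite_setOf_lt (r + 2 * g)).subset fun _ hy => hy.2)
    (Set.sep_subset T _) fun _ hx => Bicyclic.invGen_of_mem hT hg hr hmin hx
end
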